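/- Let n ≥ 1 be an integer, let ω ⊂ ℝⁿ be a bounded open set with Lipschitz boundary, and let −∞ < a < b < ∞. Then the open cylinder Ω := (a,b) × ω ⊂ ℝ^{n+1} has Lipschitz boundary. -/

import Mathlib

open MeasureTheory Set
open scoped ENNReal NNReal Pointwise

noncomputable section

/-- `Euc k` is the Euclidean space `ℝᵏ`. -/
abbrev Euc (k : ℕ) := EuclideanSpace ℝ (Fin k)

/-- An open set `U ⊆ ℝ^m` has Lipschitz boundary: near every boundary point, after an
affine isometry, `U` is the subgraph of a Lipschitz function of the first `m-1` coordinates. -/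
def HasLipschitzBoundary {m : ℕ} (U : Set (Euc m)) : Prop :=
  ∀ p ∈ frontier U,
    ∃ (hm : 0 < m) (r : ℝ) (Φ : Euc m ≃ᵃⁱ[ℝ] Euc m)
      (h : Euc (m - 1) → ℝ) (K : ℝ≥0),
      0 < r ∧ Φ 0 = p ∧ LipschitzWith K h ∧ h 0 = 0 ∧
      U ∩ Metric.ball p r =
        (Φ '' {y : Euc m | y ⟨m - 1, Nat.sub_lt hm Nat.one_pos⟩ <
            h (WithLp.toLp 2 (fun i : Fin (m - 1) => y ⟨i.1, lt_of_lt_of_le i.2 (Nat.sub_le m 1)⟩))}) ∩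
          Metric.ball p r

/-- The last `n` coordinates `x′` of a point `x = (x₁, x′) ∈ ℝ^{n+1}`. -/
def tailE {n : ℕ} (x : Euc (n + 1)) : Euc n := WithLp.toLp 2 (fun i => x i.succ)

/-- The infinite sharp cone `Ω_ε = {(x₁,x′) : x₁ > 0, x′ ∈ ε x₁ ω}`. -/
def cone (n : ℕ) (ω : Set (Euc n)) (ε : ℝ) : Set (Euc (n + 1)) :=
  {x | 0 < x 0 ∧ tailE x ∈ (ε * x 0) • ω}

/-- The geometric constant `N_ω = σ_{n-1}(∂ω) / |ω|`. -/
def Nomega (n : ℕ) (ω : Set (Euc n)) : ℝ :=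
  (μH[(n : ℝ) - 1] (frontier ω)).toReal / (volume ω).toReal

/-- The `j`-th min-max value `Λ_j(q, D)`: infimum over `j`-dimensional subspaces `S ⊆ D`
(of functions, identified with their restrictions to `U`) of the supremum of the Rayleigh
quotients `q(u) / ‖u‖²_{L²(U,μ)}` over nonzero `u ∈ S`. -/
def lambdaJ {X : Type*} [MeasurableSpace X] (μ : Measure X) (U : Set X)
    (q : (X → ℝ) → ℝ) (D : Set (X → ℝ)) (j : ℕ) : ℝ :=
  sInf {v : ℝ | ∃ S : Submodule ℝ (X → ℝ), (S : Set (X → ℝ)) ⊆ D ∧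
    Module.finrank ℝ S = j ∧
    (∀ u ∈ S, (∀ x ∈ U, u x = 0) → u = 0) ∧
    v = sSup {w : ℝ | ∃ u ∈ S, u ≠ (0 : X → ℝ) ∧
      w = q u / ∫ x in U, (u x) ^ 2 ∂μ}}

/-- The class of smooth compactly supported functions on `ℝ^{n+1}` vanishing for
`x₁` outside some compact interval `[b,c] ⊆ I`. -/
def Ddom (n : ℕ) (I : Set ℝ) : Set (Euc (n + 1) → ℝ) :=
  {u | ContDiff ℝ (⊤ : ℕ∞) u ∧ HasCompactSupport u ∧
    ∃ b c : ℝ, b ≤ c ∧ Icc b c ⊆ I ∧ ∀ x : Euc (n + 1), x 0 ∉ Icc b c → u x = 0}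

/-- The Robin form `q_ε^α(u) = ∫_{Ω_ε} |∇u|² dx − α ∫_{∂Ω_ε} u² dσ_n`. -/
def qform (n : ℕ) (ω : Set (Euc n)) (α ε : ℝ) (u : Euc (n + 1) → ℝ) : ℝ :=
  (∫ x in cone n ω ε, ‖fderiv ℝ u x‖ ^ 2) -
    α * ∫ x in frontier (cone n ω ε), (u x) ^ 2 ∂μH[(n : ℝ)]

/-- The truncated Robin form `t_ε(u) = ∫_{V_ε} |∇u|² dx − ∫_{∂₀V_ε} u² dσ_n`. -/
def tform (n : ℕ) (ω : Set (Euc n)) (a ε : ℝ) (u : Euc (n + 1) → ℝ) : ℝ :=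
  (∫ x in cone n ω ε ∩ {x | x 0 < a}, ‖fderiv ℝ u x‖ ^ 2) -
    ∫ x in frontier (cone n ω ε) ∩ {x | x 0 < a}, (u x) ^ 2 ∂μH[(n : ℝ)]

/-- The map `X(s,t) = (s, ε s t)`. -/
def Xmap (n : ℕ) (ε s : ℝ) (t : Euc n) : Euc (n + 1) :=
  WithLp.toLp 2 (fun j => Fin.cases s (fun i => ε * s * t i) j)

/-- Smooth real functions with compact support contained in `I`. -/
def Cc (I : Set ℝ) : Set (ℝ → ℝ) :=
  {f | ContDiff ℝ (⊤ : ℕ∞) f ∧ HasCompactSupport f ∧ tsupport f ⊆ I}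

/-- The 1D form `∫_I [f′(s)² + ((n²−2n)/(4s²) − N/(λ s)) f(s)²] ds`. -/
def aform (n : ℕ) (N lam : ℝ) (I : Set ℝ) (f : ℝ → ℝ) : ℝ :=
  ∫ s in I,
    ((deriv f s) ^ 2 + (((n : ℝ) ^ 2 - 2 * n) / (4 * s ^ 2) - N / (lam * s)) * (f s) ^ 2)

/-- `R = sup_{t ∈ ω} |t|`. -/
def Rsup (n : ℕ) (ω : Set (Euc n)) : ℝ := sSup ((fun t => ‖t‖) '' ω)


/-!
A boundary point `p = (p₀, q)` of `(a, b) × ω` lies on the lateral boundary (`a < p₀ < b`,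
`q ∈ ∂ω`), on a flat face (`p₀ ∈ {a, b}`, `q ∈ ω`) or on an edge (`p₀ ∈ {a, b}`, `q ∈ ∂ω`).
On the lateral boundary a chart of `ω` at `q`, extended trivially in the first coordinate, is a
chart of the cylinder. In the frame `y ↦ p + (σ y₀, L y')`, with `σ = ±1` and `L` the linear part
of a chart of `ω` at `q`, the cylinder is near a face the half-space `{y₀ < 0}` and near an edge the
wedge `{y₀ < 0} ∩ {y_last < g(y₁, …, y_{n-1})}`. Rotating the `(y₀, y_last)`-plane by `π/4` turns
these into the subgraphs of `z ↦ -z₀` and of `z ↦ min (-z₀) (z₀ + √2 g(z₁, …, z_{n-1}))`, which are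
Lipschitz.
-/

section Coordinates

variable {m : ℕ}

def initE (y : Euc (m + 1)) : Euc m := WithLp.toLp 2 fun i => y i.castSucc

@[simp] lemma tailE_apply (y : Euc (m + 1)) (i : Fin m) : tailE y i = y i.succ := rfl

@[simp] lemma initE_apply (y : Euc (m + 1)) (i : Fin m) : initE y i = y i.castSucc := rfl

@[simp] lemma tailE_zero : tailE (0 : Euc (m + 1)) = 0 := rfl

lemma tailE_add (x y : Euc (m + 1)) : tailE (x + y) = tailE x + tailE y := rfl

lemma tailE_sub (x y : Euc (m + 1)) : tailE (x - y) = tailE x - tailE y := rfl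

lemma tailE_smul (c : ℝ) (x : Euc (m + 1)) : tailE (c • x) = c • tailE x := rfl

@[simp] lemma tailE_toLp_cons (s : ℝ) (t : Euc m) :
    tailE (WithLp.toLp 2 (Fin.cons s fun i => t i : Fin (m + 1) → ℝ)) = t := rfl

lemma norm_sq_eq_sq_add_norm_tailE_sq (y : Euc (m + 1)) :
    ‖y‖ ^ 2 = y 0 ^ 2 + ‖tailE y‖ ^ 2 := by
  simp [EuclideanSpace.real_norm_sq_eq, Fin.sum_univ_succ]

lemma norm_tailE_le (y : Euc (m + 1)) : ‖tailE y‖ ≤ ‖y‖ := by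
  have := norm_sq_eq_sq_add_norm_tailE_sq y
  nlinarith [sq_nonneg (y 0), norm_nonneg y, norm_nonneg (tailE y)]

lemma lipschitzWith_tailE : LipschitzWith 1 (tailE : Euc (m + 1) → Euc m) :=
  LipschitzWith.of_dist_le_mul fun x y => by
    simpa [dist_eq_norm, tailE_sub] using norm_tailE_le (x - y)

lemma lipschitzWith_apply (i : Fin m) : LipschitzWith 1 fun y : Euc m => y i :=
  LipschitzWith.of_dist_le_mul fun x y => by simpa using PiLp.dist_apply_le x y i

end Coordinates

section Isometries

variable {m : ℕ}

def consIsometry (σ : ℝ) (hσ : σ ^ 2 = 1) (L : Euc m ≃ₗᵢ[ℝ] Euc m) :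
    Euc (m + 1) ≃ₗᵢ[ℝ] Euc (m + 1) :=
  LinearIsometry.toLinearIsometryEquiv
    { toFun := fun y => WithLp.toLp 2 (Fin.cons (σ * y 0) fun i => L (tailE y) i)
      map_add' := fun x y => by
        ext i; refine Fin.cases ?_ (fun j => ?_) i <;> simp [mul_add, tailE_add]
      map_smul' := fun c x => by
        ext i; refine Fin.cases ?_ (fun j => ?_) i <;> simp [mul_left_comm, tailE_smul]
      norm_map' := fun y => (sq_eq_sq₀ (norm_nonneg _) (norm_nonneg _)).mp <| by
        rw [norm_sq_eq_sq_add_norm_tailE_sq, norm_sq_eq_sq_add_norm_tailE_sq y]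
        simp [mul_pow, hσ] }
    rfl

end Isometries

section Rotation

variable {m : ℕ}

def diagRotation : Euc (m + 1 + 1) ≃ₗᵢ[ℝ] Euc (m + 1 + 1) :=
  LinearIsometry.toLinearIsometryEquiv
    { toFun := fun z => WithLp.toLp 2 (Fin.cons ((z 0 + z (Fin.last (m + 1))) / √2)
        (Fin.snoc (α := fun _ => ℝ) (fun i : Fin m => z i.castSucc.succ)
          ((z (Fin.last (m + 1)) - z 0) / √2)))
      map_add' := fun x y => by
        ext i
        refine Fin.cases ?_ (fun j => Fin.lastCases ?_ (fun l => ?_) j) i <;>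
          simp only [PiLp.add_apply, Fin.cons_zero, Fin.cons_succ, Fin.succ_last, Fin.cons_last,
            Fin.snoc_last, Fin.snoc_castSucc] <;> ring
      map_smul' := fun c x => by
        ext i
        refine Fin.cases ?_ (fun j => Fin.lastCases ?_ (fun l => ?_) j) i <;>
          simp only [PiLp.smul_apply, smul_eq_mul, Real.ringHom_apply, Fin.cons_zero, Fin.cons_succ,
            Fin.succ_last, Fin.cons_last, Fin.snoc_last, Fin.snoc_castSucc] <;> ring
      norm_map' := fun z => (sq_eq_sq₀ (norm_nonneg _) (norm_nonneg _)).mp <| by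
        simp only [EuclideanSpace.real_norm_sq_eq]
        rw [Fin.sum_univ_succ, Fin.sum_univ_castSucc, Fin.sum_univ_succ, Fin.sum_univ_castSucc]
        simp only [LinearMap.coe_mk, AddHom.coe_mk, Fin.cons_zero, Fin.cons_succ, Fin.snoc_castSucc,
          Fin.succ_last, Fin.cons_last, Fin.snoc_last, div_pow, Nat.ofNat_nonneg, Real.sq_sqrt]
        ring }
    rfl

lemma diagRotation_apply_zero (z : Euc (m + 1 + 1)) :
    diagRotation z 0 = (z 0 + z (Fin.last (m + 1))) / √2 := rfl

lemma diagRotation_apply_last (z : Euc (m + 1 + 1)) :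
    diagRotation z (Fin.last (m + 1)) = (z (Fin.last (m + 1)) - z 0) / √2 := by
  simp [diagRotation]

lemma initE_tailE_diagRotation (z : Euc (m + 1 + 1)) :
    initE (tailE (diagRotation z)) = tailE (initE z) := by
  ext i; simp [diagRotation]

lemma diagRotation_apply_zero_neg_iff (z : Euc (m + 1 + 1)) :
    diagRotation z 0 < 0 ↔ z (Fin.last (m + 1)) < -z 0 := by
  rw [diagRotation_apply_zero, div_neg_iff]
  have : 0 < √2 := by positivity
  constructor
  · rintro (⟨-, h⟩ | ⟨h, -⟩) <;> linarith
  · intro h; right; constructor <;> linarith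

lemma diagRotation_apply_last_lt_iff (z : Euc (m + 1 + 1)) (c : ℝ) :
    diagRotation z (Fin.last (m + 1)) < c ↔ z (Fin.last (m + 1)) < z 0 + √2 * c := by
  rw [diagRotation_apply_last, div_lt_iff₀ (by positivity), mul_comm, sub_lt_iff_lt_add']

end Rotation

section Charts

variable {m : ℕ}

lemma inter_ball_eq_image_inter_ball_iff {E : Type*} [NormedAddCommGroup E] [NormedSpace ℝ E]
    (Φ : E ≃ᵃⁱ[ℝ] E) {p : E} (hΦ : Φ 0 = p) (U S : Set E) (r : ℝ) :
    U ∩ Metric.ball p r = Φ '' S ∩ Metric.ball p r ↔ ∀ y, ‖y‖ < r → (Φ y ∈ U ↔ y ∈ S) := by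
  have mem_ball (y : E) : Φ y ∈ Metric.ball p r ↔ ‖y‖ < r := by
    rw [Metric.mem_ball, ← hΦ, Φ.dist_map, dist_zero_right]
  constructor
  · intro hU y hy
    have := Set.ext_iff.mp hU (Φ y)
    simpa [(mem_ball y).mpr hy, Φ.injective.mem_set_image] using this
  · intro hU
    ext x
    obtain ⟨y, rfl⟩ := Φ.surjective x
    simp only [Set.mem_inter_iff, Φ.injective.mem_set_image, mem_ball]
    exact and_congr_left (hU y)

def HasLipschitzChartAt (U : Set (Euc (m + 1))) (p : Euc (m + 1)) : Prop :=
  ∃ r > 0, ∃ (L : Euc (m + 1) ≃ₗᵢ[ℝ] Euc (m + 1)) (h : Euc m → ℝ) (K : ℝ≥0),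
    LipschitzWith K h ∧ h 0 = 0 ∧
      ∀ y : Euc (m + 1), ‖y‖ < r → (p + L y ∈ U ↔ y (Fin.last m) < h (initE y))

lemma hasLipschitzBoundary_iff_forall_hasLipschitzChartAt {U : Set (Euc (m + 1))} :
    HasLipschitzBoundary U ↔ ∀ p ∈ frontier U, HasLipschitzChartAt U p := by
  refine forall₂_congr fun p _ => ⟨?_, ?_⟩
  · rintro ⟨_, r, Φ, h, K, hr, hΦ, hh, h0, hU⟩
    have hΦ_apply (y : Euc (m + 1)) : Φ y = p + Φ.linearIsometryEquiv y := by
      simpa [hΦ, add_comm] using Φ.map_vadd 0 y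
    refine ⟨r, hr, Φ.linearIsometryEquiv, h, K, hh, h0, fun y hy => ?_⟩
    rw [← hΦ_apply]
    exact (inter_ball_eq_image_inter_ball_iff Φ hΦ U _ r).mp hU y hy
  · rintro ⟨r, hr, L, h, K, hh, h0, hU⟩
    let Φ := L.toAffineIsometryEquiv.trans (AffineIsometryEquiv.constVAdd ℝ (Euc (m + 1)) p)
    have hΦ_apply (y : Euc (m + 1)) : Φ y = p + L y := by
      simp [Φ]
    refine ⟨m.succ_pos, r, Φ, h, K, hr, by simp [hΦ_apply], hh, h0, ?_⟩
    refine (inter_ball_eq_image_inter_ball_iff Φ (by simp [hΦ_apply]) U _ r).mpr fun y hy => ?_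
    rw [hΦ_apply]
    exact hU y hy

end Charts

section Cylinder

variable {m : ℕ}

def cylinder (a b : ℝ) (ω : Set (Euc m)) : Set (Euc (m + 1)) :=
  {x | x 0 ∈ Ioo a b ∧ tailE x ∈ ω}

lemma add_consIsometry_mem_cylinder_iff {a b : ℝ} {ω : Set (Euc m)} (p : Euc (m + 1))
    (σ : ℝ) (hσ : σ ^ 2 = 1) (L : Euc m ≃ₗᵢ[ℝ] Euc m) (y : Euc (m + 1)) :
    p + consIsometry σ hσ L y ∈ cylinder a b ω ↔
      p 0 + σ * y 0 ∈ Ioo a b ∧ tailE p + L (tailE y) ∈ ω :=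
  Iff.rfl

lemma mem_frontier_cylinder {a b : ℝ} (hab : a < b) {ω : Set (Euc m)} {p : Euc (m + 1)}
    (hp : p ∈ frontier (cylinder a b ω)) :
    ((p 0 = a ∨ p 0 = b) ∧ tailE p ∈ closure ω) ∨ (p 0 ∈ Icc a b ∧ tailE p ∈ frontier ω) := by
  have h0 : Continuous fun x : Euc (m + 1) => x 0 := (lipschitzWith_apply 0).continuous
  have ht : Continuous (tailE : Euc (m + 1) → Euc m) := lipschitzWith_tailE.continuous
  rcases frontier_inter_subset ((fun x : Euc (m + 1) => x 0) ⁻¹' Ioo a b) (tailE ⁻¹' ω) hp with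
    ⟨hI, hω⟩ | ⟨hI, hω⟩
  · have := h0.frontier_preimage_subset _ hI
    rw [frontier_Ioo hab] at this
    exact Or.inl ⟨this, ht.closure_preimage_subset _ hω⟩
  · have := h0.closure_preimage_subset _ hI
    rw [closure_Ioo hab.ne] at this
    exact Or.inr ⟨this, ht.frontier_preimage_subset _ hω⟩

lemma exists_sign_of_endpoint {a b s₀ : ℝ} (h : s₀ = a ∨ s₀ = b) :
    ∃ σ : ℝ, ∃ _ : σ ^ 2 = 1, ∀ s, |s| < b - a → (s₀ + σ * s ∈ Ioo a b ↔ s < 0) := by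
  rcases h with rfl | rfl
  · refine ⟨-1, by norm_num, fun s hs => ?_⟩
    rw [abs_lt] at hs
    constructor
    · rintro ⟨h, -⟩; linarith
    · intro h; constructor <;> linarith
  · refine ⟨1, by norm_num, fun s hs => ?_⟩
    rw [abs_lt] at hs
    constructor
    · rintro ⟨-, h⟩; linarith
    · intro h; constructor <;> linarith

lemma abs_apply_le_norm (y : Euc m) (i : Fin m) : |y i| ≤ ‖y‖ := by
  simpa using PiLp.norm_apply_le y i

lemma hasLipschitzChartAt_cylinder_of_mem_Ioo {a b : ℝ} {ω : Set (Euc (m + 1))}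
    {p : Euc (m + 1 + 1)} (hp : p 0 ∈ Ioo a b) (hω : HasLipschitzChartAt ω (tailE p)) :
    HasLipschitzChartAt (cylinder a b ω) p := by
  obtain ⟨ε, hε, hball⟩ := Metric.isOpen_iff.mp isOpen_Ioo _ hp
  obtain ⟨r, hr, L, g, K, hg, hg0, hωL⟩ := hω
  refine ⟨min r ε, lt_min hr hε, consIsometry 1 (one_pow 2) L, fun w => g (tailE w), K * 1,
    hg.comp lipschitzWith_tailE, by simpa using hg0, fun y hy => ?_⟩
  have hy0 : p 0 + 1 * y 0 ∈ Ioo a b := hball <| by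
    simpa [Real.dist_eq] using (abs_apply_le_norm y 0).trans_lt (hy.trans_le (min_le_right _ _))
  rw [add_consIsometry_mem_cylinder_iff,
    hωL _ ((norm_tailE_le y).trans_lt (hy.trans_le (min_le_left _ _)))]
  exact and_iff_right hy0

lemma hasLipschitzChartAt_cylinder_of_endpoint {a b : ℝ} (hab : a < b) {ω : Set (Euc (m + 1))}
    {p : Euc (m + 1 + 1)} (hp : p 0 = a ∨ p 0 = b) (hω : HasLipschitzChartAt ω (tailE p)) :
    HasLipschitzChartAt (cylinder a b ω) p := by
  obtain ⟨σ, hσ, hside⟩ := exists_sign_of_endpoint hp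
  obtain ⟨r, hr, L, g, K, hg, hg0, hωL⟩ := hω
  refine ⟨min r (b - a), lt_min hr (sub_pos.mpr hab),
    diagRotation.trans (consIsometry σ hσ L), fun w => min (-w 0) (w 0 + √2 * g (tailE w)), _,
    ((lipschitzWith_apply 0).neg).min
      ((lipschitzWith_apply 0).add ((lipschitzWith_smul √2).comp (hg.comp lipschitzWith_tailE))),
    by simp [hg0], fun z hz => ?_⟩
  have hRz : ‖diagRotation z‖ < min r (b - a) := by rwa [LinearIsometryEquiv.norm_map]
  rw [LinearIsometryEquiv.trans_apply, add_consIsometry_mem_cylinder_iff,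
    hside _ ((abs_apply_le_norm _ 0).trans_lt (hRz.trans_le (min_le_right _ _))),
    hωL _ ((norm_tailE_le _).trans_lt (hRz.trans_le (min_le_left _ _))),
    diagRotation_apply_zero_neg_iff, initE_tailE_diagRotation, tailE_apply, Fin.succ_last,
    diagRotation_apply_last_lt_iff]
  exact lt_min_iff.symm

lemma hasLipschitzChartAt_cylinder_of_endpoint_of_mem {a b : ℝ} (hab : a < b)
    {ω : Set (Euc (m + 1))} (hω : IsOpen ω) {p : Euc (m + 1 + 1)} (hp : p 0 = a ∨ p 0 = b)
    (hq : tailE p ∈ ω) : HasLipschitzChartAt (cylinder a b ω) p := by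
  obtain ⟨σ, hσ, hside⟩ := exists_sign_of_endpoint hp
  obtain ⟨r, hr, hball⟩ := Metric.isOpen_iff.mp hω _ hq
  refine ⟨min r (b - a), lt_min hr (sub_pos.mpr hab),
    diagRotation.trans (consIsometry σ hσ (LinearIsometryEquiv.refl ℝ _)), fun w => -w 0, 1,
    (lipschitzWith_apply 0).neg, by simp, fun z hz => ?_⟩
  have hRz : ‖diagRotation z‖ < min r (b - a) := by rwa [LinearIsometryEquiv.norm_map]
  have htail : tailE p + tailE (diagRotation z) ∈ ω := hball <| by
    simpa using (norm_tailE_le _).trans_lt (hRz.trans_le (min_le_left _ _))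
  rw [LinearIsometryEquiv.trans_apply, add_consIsometry_mem_cylinder_iff,
    hside _ ((abs_apply_le_norm _ 0).trans_lt (hRz.trans_le (min_le_right _ _))),
    diagRotation_apply_zero_neg_iff]
  exact and_iff_left htail

end Cylinder

theorem hasLipschitzBoundary_cylinder {m : ℕ} {a b : ℝ} (hab : a < b) {ω : Set (Euc (m + 1))}
    (hω_open : IsOpen ω) (hω : HasLipschitzBoundary ω) :
    HasLipschitzBoundary (cylinder a b ω) := by
  rw [hasLipschitzBoundary_iff_forall_hasLipschitzChartAt] at hω ⊢
  intro p hp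
  rcases mem_frontier_cylinder hab hp with ⟨hend, hcl⟩ | ⟨hI, hq⟩
  · by_cases hq : tailE p ∈ frontier ω
    · exact hasLipschitzChartAt_cylinder_of_endpoint hab hend (hω _ hq)
    · have hq' : tailE p ∈ ω := by
        rw [← hω_open.interior_eq, ← closure_sdiff_frontier]
        exact ⟨hcl, hq⟩
      exact hasLipschitzChartAt_cylinder_of_endpoint_of_mem hab hω_open hend hq'
  · rcases eq_endpoints_or_mem_Ioo_of_mem_Icc hI with hend | hend | hI
    · exact hasLipschitzChartAt_cylinder_of_endpoint hab (.inl hend) (hω _ hq)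
    · exact hasLipschitzChartAt_cylinder_of_endpoint hab (.inr hend) (hω _ hq)
    · exact hasLipschitzChartAt_cylinder_of_mem_Ioo hI (hω _ hq)

theorem statement19_general (n : ℕ) (hn : 1 ≤ n) (ω : Set (Euc n)) (hω_open : IsOpen ω)
    (hω_lip : HasLipschitzBoundary ω)
    (a b : ℝ) (hab : a < b) :
    HasLipschitzBoundary {x : Euc (n + 1) | x 0 ∈ Ioo a b ∧ tailE x ∈ ω} := by
  obtain ⟨k, rfl⟩ := Nat.exists_eq_add_of_le' hn
  exact hasLipschitzBoundary_cylinder hab hω_open hω_lip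

/-- the cylinder `(a,b) × ω` has Lipschitz boundary. -/
theorem statement19 (n : ℕ) (hn : 1 ≤ n) (ω : Set (Euc n)) (hω_open : IsOpen ω)
    (hω_bdd : Bornology.IsBounded ω) (hω_lip : HasLipschitzBoundary ω)
    (a b : ℝ) (hab : a < b) :
    HasLipschitzBoundary {x : Euc (n + 1) | x 0 ∈ Ioo a b ∧ tailE x ∈ ω} :=
  statement19_general n hn ω hω_open hω_lip a b hab
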